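/- Let X be a Σ_cx-smallest element of SB_d. Then the average pairwise Pearson correlation of X equals -1/(d-1) if d is even and -1/d if d is odd. -/

import Mathlib

open Finset

/-- A pmf on {0,1}^d with all one-dimensional marginals Bernoulli(1/2). -/
def isSB (d : ℕ) (f : (Fin d → Bool) → ℝ) : Prop :=
  (∀ x, 0 ≤ f x) ∧ (∑ x, f x = 1) ∧
    ∀ h : Fin d, ∑ x ∈ univ.filter (fun x => x h = true), f x = 1/2

/-- Number of ones (sum of the components) of a binary vector. -/
def sumC {d : ℕ} (x : Fin d → Bool) : ℕ :=
  (univ.filter (fun i => x i = true)).card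

/-- f is a Σ_cx-smallest element of SB_d. -/
def SigmaCxSmallest (d : ℕ) (f : (Fin d → Bool) → ℝ) : Prop :=
  isSB d f ∧ ∀ g, isSB d g → ∀ φ : ℝ → ℝ, ConvexOn ℝ Set.univ φ →
    ∑ x, f x * φ (sumC x) ≤ ∑ x, g x * φ (sumC x)

/-! For every `f ∈ SB_d` the number of ones `S` has mean `d/2`, and counting pairs of ones gives
`∑_{i<j} P(X_i = X_j = 1) = E[S(S-1)/2]`, so the average correlation is an affine function of
`Var S = E[(S - d/2)^2]`. As `t ↦ (t - d/2)^2` is convex, a Σ_cx-smallest `f` minimises `Var S`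
over SB_d. Since `S` is integer-valued, `Var S ≥ (d mod 2)/4`, and this bound is attained by the
equal mixture of a vector with `⌊d/2⌋` ones and its complement, which lies in SB_d. -/

namespace Finset

variable {α : Type*} [LinearOrder α]

theorem card_filter_fst_lt_snd_product_self (s : Finset α) :
    #{p ∈ s ×ˢ s | p.1 < p.2} = (#s).choose 2 := by
  have hsplit := card_filter_add_card_filter_not (s := s.offDiag) (fun p : α × α => p.1 < p.2)
  have hswap : #{p ∈ s.offDiag | ¬p.1 < p.2} = #{p ∈ s.offDiag | p.1 < p.2} := by
    refine card_nbij' Prod.swap Prod.swap ?_ ?_ (fun _ _ => rfl) (fun _ _ => rfl) <;>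
    · intro p hp
      simp only [coe_filter, mem_offDiag, Set.mem_ofPred_eq, Prod.fst_swap, Prod.snd_swap] at hp ⊢
      grind
  have hlt : {p ∈ s.offDiag | p.1 < p.2} = {p ∈ s ×ˢ s | p.1 < p.2} := by
    ext p; simp only [mem_filter, mem_offDiag, mem_product]; grind
  rw [hswap, hlt, offDiag_card] at hsplit
  rw [Nat.choose_two_right, Nat.mul_sub_one]
  omega

end Finset

theorem convexOn_sub_const_sq (c : ℝ) : ConvexOn ℝ Set.univ fun t : ℝ => (t - c) ^ 2 := by
  simpa [Function.comp_def, sub_eq_neg_add] using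
    (even_two.convexOn_pow (𝕜 := ℝ)).translate_right (-c)

theorem mod_two_div_four_le_sq_natCast_sub_half (n d : ℕ) :
    ((d % 2 : ℕ) : ℝ) / 4 ≤ ((n : ℝ) - d / 2) ^ 2 := by
  obtain ⟨m, rfl | rfl⟩ := Nat.even_or_odd' d
  · simp [sq_nonneg]
  · have hm : n ≤ m ∨ m + 1 ≤ n := by omega
    push_cast
    rw [Nat.add_mod, Nat.mul_mod_right]
    norm_num
    rcases hm with hm | hm
    · have hm' : (n : ℝ) ≤ m := by exact_mod_cast hm
      nlinarith
    · have hm' : (m : ℝ) + 1 ≤ n := by exact_mod_cast hm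
      nlinarith

section Sums

variable {d : ℕ}

theorem natCast_sumC (x : Fin d → Bool) :
    (sumC x : ℝ) = ∑ i, if x i = true then (1 : ℝ) else 0 := by
  rw [sum_boole]; rfl

theorem sumC_compl (x : Fin d → Bool) : sumC xᶜ = d - sumC x := by
  have h := card_filter_add_card_filter_not (s := univ) (fun i => x i = true)
  simp only [card_univ, Fintype.card_fin] at h
  have hc : sumC xᶜ = #{i | ¬x i = true} := by simp [sumC]
  rw [hc, sumC]
  omega

theorem exists_sumC_eq {k : ℕ} (hk : k ≤ d) : ∃ x : Fin d → Bool, sumC x = k :=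
  ⟨fun i => decide ((i : ℕ) < k), by simp [sumC, Fin.card_filter_val_lt, hk]⟩

theorem sum_pairs_sum_filter_eq_sum_mul_choose (f : (Fin d → Bool) → ℝ) :
    ∑ p ∈ univ.filter (fun p : Fin d × Fin d => p.1 < p.2),
        ∑ x ∈ univ.filter (fun x => x p.1 = true ∧ x p.2 = true), f x
      = ∑ x, f x * (sumC x).choose 2 := by
  rw [sum_comm' (t' := univ)
    (s' := fun x => univ.filter fun p : Fin d × Fin d =>
      p.1 < p.2 ∧ x p.1 = true ∧ x p.2 = true)
    (fun _ _ => by simp)]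
  refine sum_congr rfl fun x _ => ?_
  have hpairs : univ.filter (fun p : Fin d × Fin d => p.1 < p.2 ∧ x p.1 = true ∧ x p.2 = true)
      = {p ∈ univ.filter (x · = true) ×ˢ univ.filter (x · = true) | p.1 < p.2} := by
    ext p; simp only [mem_filter, mem_univ, mem_product, true_and]; tauto
  rw [sum_const, hpairs, card_filter_fst_lt_snd_product_self, nsmul_eq_mul, mul_comm]
  rfl

end Sums

noncomputable def varSumC (d : ℕ) (f : (Fin d → Bool) → ℝ) : ℝ :=
  ∑ x, f x * ((sumC x : ℝ) - d / 2) ^ 2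

noncomputable def avgCorr (d : ℕ) (f : (Fin d → Bool) → ℝ) : ℝ :=
  (2 / ((d : ℝ) * ((d : ℝ) - 1))) *
    ∑ p ∈ univ.filter (fun p : Fin d × Fin d => p.1 < p.2),
      (4 * (∑ x ∈ univ.filter (fun x => x p.1 = true ∧ x p.2 = true), f x) - 1)

namespace isSB

variable {d : ℕ} {f : (Fin d → Bool) → ℝ}

theorem sum_mul_sumC (hf : isSB d f) : ∑ x, f x * sumC x = d / 2 := by
  calc ∑ x, f x * sumC x = ∑ i, ∑ x ∈ univ.filter (fun x => x i = true), f x := by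
        simp_rw [natCast_sumC, mul_sum, mul_ite, mul_one, mul_zero, sum_filter]
        exact sum_comm
    _ = d / 2 := by simp only [hf.2.2, sum_const, card_univ, Fintype.card_fin, nsmul_eq_mul]; ring

theorem avgCorr_eq (hf : isSB d f) : avgCorr d f = (4 * varSumC d f - d) / (d * (d - 1)) := by
  have hpairs : ∑ x, f x * (sumC x).choose 2
      = varSumC d f / 2 + (d - 1) / 2 * ∑ x, f x * sumC x - d ^ 2 / 8 * ∑ x, f x := by
    simp only [varSumC, mul_sum, sum_div, ← sum_add_distrib, ← sum_sub_distrib]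
    refine sum_congr rfl fun x _ => ?_
    rw [Nat.cast_choose_two]
    ring
  have hcard : (#{p : Fin d × Fin d | p.1 < p.2} : ℝ) = d * (d - 1) / 2 := by
    rw [← univ_product_univ, card_filter_fst_lt_snd_product_self, card_univ, Fintype.card_fin,
      Nat.cast_choose_two]
  rw [avgCorr, sum_sub_distrib, ← mul_sum, sum_pairs_sum_filter_eq_sum_mul_choose, hpairs,
    hf.sum_mul_sumC, hf.2.1, sum_const, nsmul_one, hcard]
  ring

theorem mod_two_div_four_le_varSumC (hf : isSB d f) : ((d % 2 : ℕ) : ℝ) / 4 ≤ varSumC d f :=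
  calc ((d % 2 : ℕ) : ℝ) / 4 = ∑ x, f x * (((d % 2 : ℕ) : ℝ) / 4) := by
        rw [← sum_mul, hf.2.1, one_mul]
    _ ≤ varSumC d f := sum_le_sum fun x _ =>
      mul_le_mul_of_nonneg_left (mod_two_div_four_le_sq_natCast_sub_half _ d) (hf.1 x)

end isSB

section AntipodalMix

variable {d : ℕ}

noncomputable def antipodalMix (x : Fin d → Bool) : (Fin d → Bool) → ℝ := fun y =>
  ((if y = x then 1 else 0) + (if y = xᶜ then 1 else 0)) / 2

theorem sum_antipodalMix_mul (x : Fin d → Bool) (c : (Fin d → Bool) → ℝ) :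
    ∑ y, antipodalMix x y * c y = (c x + c xᶜ) / 2 := by
  simp [antipodalMix, add_mul, div_mul_eq_mul_div, ← sum_div, sum_add_distrib]

theorem isSB_antipodalMix (x : Fin d → Bool) : isSB d (antipodalMix x) := by
  refine ⟨fun y => by unfold antipodalMix; positivity, ?_, fun i => ?_⟩
  · simpa using sum_antipodalMix_mul x 1
  · rw [sum_filter]
    convert sum_antipodalMix_mul x (fun y => if y i = true then 1 else 0) using 1
    · simp [mul_ite]
    · cases h : x i <;> simp [h]

theorem varSumC_antipodalMix {x : Fin d → Bool} (hx : sumC x = d / 2) :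
    varSumC d (antipodalMix x) = ((d % 2 : ℕ) : ℝ) / 4 := by
  have hd : (d : ℝ) = 2 * (d / 2 : ℕ) + (d % 2 : ℕ) := by
    exact_mod_cast (Nat.div_add_mod d 2).symm
  have hmod : ((d % 2 : ℕ) : ℝ) ^ 2 = (d % 2 : ℕ) := by
    rcases Nat.mod_two_eq_zero_or_one d with h | h <;> simp [h]
  rw [varSumC, sum_antipodalMix_mul, sumC_compl, hx, Nat.cast_sub (Nat.div_le_self d 2)]
  nth_rewrite 2 [hd]
  rw [hd]
  linear_combination hmod / 4

end AntipodalMix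

theorem SigmaCxSmallest.varSumC_eq {d : ℕ} {f : (Fin d → Bool) → ℝ}
    (hf : SigmaCxSmallest d f) : varSumC d f = ((d % 2 : ℕ) : ℝ) / 4 := by
  obtain ⟨x, hx⟩ := exists_sumC_eq (Nat.div_le_self d 2)
  refine le_antisymm ?_ hf.1.mod_two_div_four_le_varSumC
  rw [← varSumC_antipodalMix hx]
  exact hf.2 _ (isSB_antipodalMix x) _ (convexOn_sub_const_sq (d / 2))

/-- the average pairwise Pearson correlation of a Σ_cx-smallest element
of SB_d equals -1/(d-1) if d is even and -1/d if d is odd. -/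
theorem stmt_12 (d : ℕ) (hd : 2 ≤ d) (f : (Fin d → Bool) → ℝ)
    (hf : SigmaCxSmallest d f) :
    (Even d →
      (2 / ((d : ℝ) * ((d : ℝ) - 1))) *
          ∑ p ∈ univ.filter (fun p : Fin d × Fin d => p.1 < p.2),
            (4 * (∑ x ∈ univ.filter (fun x => x p.1 = true ∧ x p.2 = true), f x) - 1)
        = -1 / ((d : ℝ) - 1)) ∧
    (Odd d →
      (2 / ((d : ℝ) * ((d : ℝ) - 1))) *
          ∑ p ∈ univ.filter (fun p : Fin d × Fin d => p.1 < p.2),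
            (4 * (∑ x ∈ univ.filter (fun x => x p.1 = true ∧ x p.2 = true), f x) - 1)
        = -1 / (d : ℝ)) := by
  have hd₀ : (d : ℝ) ≠ 0 := by positivity
  have hd₁ : (d : ℝ) - 1 ≠ 0 := by
    have : (2 : ℝ) ≤ d := by exact_mod_cast hd
    linarith
  have hcorr : avgCorr d f = ((d % 2 : ℕ) - d) / (d * (d - 1)) := by
    rw [hf.1.avgCorr_eq, hf.varSumC_eq]; ring
  refine ⟨fun he => hcorr.trans ?_, fun ho => hcorr.trans ?_⟩
  · rw [Nat.even_iff.mp he]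
    field_simp
    ring
  · rw [Nat.odd_iff.mp ho]
    field_simp
    ring
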